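/- arXiv:0803.0596 — 5 statements merged into one kernel-verified Lean document; each statement's English description precedes it below -/
import Mathlib

section
/- The twisted Jacobi identity for the triple (L_m, L_n, L_p) in the centerless q-deformed Witt algebra holds: (q^m+1)([n]_q-[p]_q)([m]_q-[n+p]_q) L_{m+n+p} + (q^p+1)([m]_q-[n]_q)([p]_q-[m+n]_q) L_{m+n+p} + (q^n+1)([p]_q-[m]_q)([n]_q-[p+m]_q) L_{m+n+p} = 0, i.e., the coefficient sum vanishes for all m, n, p ∈ ℤ. -/
/-- The q-number [n]_q = (q^n - 1)/(q - 1). -/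
noncomputable def qnum (q : ℂ) (n : ℤ) : ℂ := (q ^ n - 1) / (q - 1)

/-- The coefficient sum in the twisted Jacobi identity for `(L_m, L_n, L_p)` in the
centerless q-deformed Witt algebra vanishes for all `m n p : ℤ`. -/
theorem qWitt_twisted_jacobi_coeff (q : ℂ) (hq0 : q ≠ 0) (hq1 : q ≠ 1) :
    ∀ m n p : ℤ,
      (q ^ m + 1) * (qnum q n - qnum q p) * (qnum q m - qnum q (n + p))
        + (q ^ p + 1) * (qnum q m - qnum q n) * (qnum q p - qnum q (m + n))
        + (q ^ n + 1) * (qnum q p - qnum q m) * (qnum q n - qnum q (p + m)) = 0 := by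
  intro m n p
  have hq1' : q - 1 ≠ 0 := sub_ne_zero.mpr hq1
  simp only [qnum, zpow_add₀ hq0]
  field_simp
  ring
end

section
/- Any q-deformed 2-cocycle ψ_q on the centerless q-deformed W algebra satisfies ψ_q(L_0, W_0) = 0, provided q is not a root of unity. -/
/-- The underlying space of the centerless q-deformed W algebra. -/
abbrev WSpace : Type := (ℤ ⊕ ℤ) →₀ ℂ

/-- The basis element `L m`. -/
noncomputable def Lb (m : ℤ) : WSpace := Finsupp.single (Sum.inl m) 1

/-- The basis element `W m`. -/
noncomputable def Wb (m : ℤ) : WSpace := Finsupp.single (Sum.inr m) 1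

/-!
Evaluate the cocycle identity on the triples `(L₀, L₁, W₋₁)`, `(L₀, L₋₁, W₁)` and `(W₀, L₁, L₋₁)`.
Writing `x = ψ(L₀, W₀)`, `a = ψ(L₁, W₋₁)`, `b = ψ(L₋₁, W₁)`, and using `[0]_q = 0`, `[1]_q = 1`,
`[-1]_q = -q⁻¹`, each identity is `(1 + q⁻¹)` times one of `x + a = 0`, `x + b = 0`,
`b - a = 2x`. Since `q ≠ -1`, these force `x = 0`.
-/

theorem qnum_zero (q : ℂ) : qnum q 0 = 0 := by
  simp [qnum]

theorem qnum_one {q : ℂ} (hq : q ≠ 1) : qnum q 1 = 1 := by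
  simp [qnum, sub_ne_zero.mpr hq]

theorem qnum_neg_one {q : ℂ} (hq0 : q ≠ 0) (hq : q ≠ 1) : qnum q (-1) = -q⁻¹ := by
  have : q - 1 ≠ 0 := sub_ne_zero.mpr hq
  simp only [qnum, zpow_neg, zpow_one]
  field_simp
  ring

theorem cocycle_apply_of_eigenvectors {R M : Type*} [CommRing R] [AddCommGroup M] [Module R M]
    {B : M →ₗ[R] M →ₗ[R] M} {f : M →ₗ[R] M}
    {ψ : M →ₗ[R] M →ₗ[R] R}
    (hcoc : ∀ u v w : M, ψ (f u) (B v w) + ψ (f w) (B u v) + ψ (f v) (B w u) = 0)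
    {u v w x y z : M} {α β γ a b c : R}
    (hu : f u = α • u) (hv : f v = β • v) (hw : f w = γ • w)
    (hvw : B v w = a • x) (huv : B u v = b • y) (hwu : B w u = c • z) :
    α * a * ψ u x + γ * b * ψ w y + β * c * ψ v z = 0 := by
  have := hcoc u v w
  simp only [hu, hv, hw, hvw, huv, hwu, map_smul, LinearMap.smul_apply, smul_eq_mul] at this
  linear_combination this

theorem cocycle_L0_W0_eq_zero_general (q : ℂ) (hq0 : q ≠ 0)
    (hgen : ∀ n : ℕ, n ≠ 0 → q ^ n ≠ 1)
    (B : WSpace →ₗ[ℂ] WSpace →ₗ[ℂ] WSpace) (f : WSpace →ₗ[ℂ] WSpace)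
    (hLL : ∀ m n : ℤ, B (Lb m) (Lb n) = (qnum q m - qnum q n) • Lb (m + n))
    (hLW : ∀ m n : ℤ, B (Lb m) (Wb n) = (qnum q m - qnum q n) • Wb (m + n))
    (hWL : ∀ m n : ℤ, B (Wb m) (Lb n) = (qnum q n - qnum q m) • Wb (m + n))
    (hfL : ∀ m : ℤ, f (Lb m) = (q ^ m + 1) • Lb m)
    (hfW : ∀ m : ℤ, f (Wb m) = (q ^ m + 1) • Wb m)
    (ψ : WSpace →ₗ[ℂ] WSpace →ₗ[ℂ] ℂ)
    (hskew : ∀ u v : WSpace, ψ u v = -ψ v u)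
    (hcoc : ∀ u v w : WSpace,
      ψ (f u) (B v w) + ψ (f w) (B u v) + ψ (f v) (B w u) = 0) :
    ψ (Lb 0) (Wb 0) = 0 := by
  have hq1 : q ≠ 1 := by simpa using hgen 1 one_ne_zero
  have hq_neg1 : q + 1 ≠ 0 := fun h => hgen 2 two_ne_zero (by
    rw [eq_neg_of_add_eq_zero_left h]; norm_num)
  have e1 := cocycle_apply_of_eigenvectors hcoc (hfL 0) (hfL 1) (hfW (-1))
    (hLW 1 (-1)) (hLL 0 1) (hWL (-1) 0)
  have e2 := cocycle_apply_of_eigenvectors hcoc (hfL 0) (hfL (-1)) (hfW 1)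
    (hLW (-1) 1) (hLL 0 (-1)) (hWL 1 0)
  have e3 := cocycle_apply_of_eigenvectors hcoc (hfW 0) (hfL 1) (hfL (-1))
    (hLL 1 (-1)) (hWL 0 1) (hLW (-1) 0)
  norm_num [qnum_zero, qnum_one hq1, qnum_neg_one hq0 hq1] at e1 e2 e3
  rw [hskew (Wb (-1)) (Lb 1)] at e1
  rw [hskew (Wb 1) (Lb (-1))] at e2
  rw [hskew (Wb 0) (Lb 0)] at e3
  have hunit : (q + 1) * q⁻¹ = 1 + q⁻¹ := by rw [add_mul, mul_inv_cancel₀ hq0, one_mul]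
  have hs : 1 + q⁻¹ ≠ 0 := hunit ▸ mul_ne_zero hq_neg1 (inv_ne_zero hq0)
  rw [hunit] at e1 e2 e3
  set x := ψ (Lb 0) (Wb 0)
  set a := ψ (Lb 1) (Wb (-1))
  set b := ψ (Lb (-1)) (Wb 1)
  have hxa : x + a = 0 := (mul_eq_zero.mp (by linear_combination e1 / 2)).resolve_left hs
  have hxb : x + b = 0 := (mul_eq_zero.mp (by linear_combination -e2 / 2)).resolve_left hs
  have hba : b - a - 2 * x = 0 := (mul_eq_zero.mp (by linear_combination e3)).resolve_left hs
  linear_combination (hxb - hxa - hba) / 2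

/-- Any q-deformed 2-cocycle on the centerless q-deformed W algebra satisfies
`ψ(L₀, W₀) = 0`, provided `q` is not a root of unity. -/
theorem cocycle_L0_W0_eq_zero (q : ℂ) (hq0 : q ≠ 0)
    (hgen : ∀ n : ℕ, n ≠ 0 → q ^ n ≠ 1)
    (B : WSpace →ₗ[ℂ] WSpace →ₗ[ℂ] WSpace) (f : WSpace →ₗ[ℂ] WSpace)
    (hLL : ∀ m n : ℤ, B (Lb m) (Lb n) = (qnum q m - qnum q n) • Lb (m + n))
    (hLW : ∀ m n : ℤ, B (Lb m) (Wb n) = (qnum q m - qnum q n) • Wb (m + n))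
    (hWL : ∀ m n : ℤ, B (Wb m) (Lb n) = (qnum q n - qnum q m) • Wb (m + n))
    (hWW : ∀ m n : ℤ, B (Wb m) (Wb n) = 0)
    (hfL : ∀ m : ℤ, f (Lb m) = (q ^ m + 1) • Lb m)
    (hfW : ∀ m : ℤ, f (Wb m) = (q ^ m + 1) • Wb m)
    (ψ : WSpace →ₗ[ℂ] WSpace →ₗ[ℂ] ℂ)
    (hskew : ∀ u v : WSpace, ψ u v = -ψ v u)
    (hcoc : ∀ u v w : WSpace,
      ψ (f u) (B v w) + ψ (f w) (B u v) + ψ (f v) (B w u) = 0) :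
    ψ (Lb 0) (Wb 0) = 0 :=
  cocycle_L0_W0_eq_zero_general q hq0 hgen B f hLL hLW hWL hfL hfW ψ hskew hcoc
end

section
/- If φ_q is a q-deformed 2-cocycle on the centerless q-deformed W algebra with φ_q(L_0, W_m) = 0 for all m ∈ ℤ*, φ_q(L_0,W_0)=0, and q is not a root of unity, then φ_q(L_m, W_n) = 0 whenever m + n ≠ 0. -/
/-- If a q-deformed 2-cocycle `φ` on the centerless q-deformed W algebra satisfies
`φ(L₀, W_m) = 0` for all `m` (including `m = 0`), and `q` is not a root of unity,
then `φ(L_m, W_n) = 0` whenever `m + n ≠ 0`. -/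
theorem cocycle_vanishes_off_diagonal (q : ℂ) (hq0 : q ≠ 0)
    (hgen : ∀ n : ℕ, n ≠ 0 → q ^ n ≠ 1)
    (B : WSpace →ₗ[ℂ] WSpace →ₗ[ℂ] WSpace) (f : WSpace →ₗ[ℂ] WSpace)
    (hLL : ∀ m n : ℤ, B (Lb m) (Lb n) = (qnum q m - qnum q n) • Lb (m + n))
    (hLW : ∀ m n : ℤ, B (Lb m) (Wb n) = (qnum q m - qnum q n) • Wb (m + n))
    (hWL : ∀ m n : ℤ, B (Wb m) (Lb n) = (qnum q n - qnum q m) • Wb (m + n))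
    (hWW : ∀ m n : ℤ, B (Wb m) (Wb n) = 0)
    (hfL : ∀ m : ℤ, f (Lb m) = (q ^ m + 1) • Lb m)
    (hfW : ∀ m : ℤ, f (Wb m) = (q ^ m + 1) • Wb m)
    (φ : WSpace →ₗ[ℂ] WSpace →ₗ[ℂ] ℂ)
    (hskew : ∀ u v : WSpace, φ u v = -φ v u)
    (hcoc : ∀ u v w : WSpace,
      φ (f u) (B v w) + φ (f w) (B u v) + φ (f v) (B w u) = 0)
    (hφ0 : ∀ m : ℤ, φ (Lb 0) (Wb m) = 0) :
    ∀ m n : ℤ, m + n ≠ 0 → φ (Lb m) (Wb n) = 0 := by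
  have hq1 : q ≠ 1 := by
    intro h; exact hgen 1 one_ne_zero (by simp [h])
  have hz : ∀ k : ℤ, k ≠ 0 → q ^ k ≠ 1 := by
    intro k hk h
    rcases lt_trichotomy k 0 with h1 | h1 | h1
    · apply hgen (-k).toNat (by omega)
      have h2 : q ^ (-k) = 1 := by rw [zpow_neg, h, inv_one]
      rw [← zpow_natCast, Int.toNat_of_nonneg (by omega)]; exact h2
    · exact hk h1
    · apply hgen k.toNat (by omega)
      rw [← zpow_natCast, Int.toNat_of_nonneg (by omega)]; exact h
  intro m n hmn
  by_cases hmeq : m = n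
  · -- m = n ≠ 0
    subst hmeq
    have hm0 : m ≠ 0 := by omega
    have hc := hcoc (Lb m) (Lb 0) (Wb m)
    simp only [hfL, hfW, hLL, hLW, hWL, hWW, map_smul, map_zero, LinearMap.smul_apply, smul_eq_mul,
      zero_add, add_zero, zpow_zero] at hc
    rw [hskew (Wb m) (Lb m)] at hc
    simp only [hφ0, qnum, sub_self, zero_div, zero_sub, sub_zero, zpow_zero] at hc
    have hcoef : (q ^ m + 1) * ((q ^ m - 1) / (q - 1)) ≠ 0 := by
      apply mul_ne_zero
      · intro h
        have : q ^ (2 * m) = 1 := by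
          have : q ^ m = -1 := by linear_combination h
          rw [two_mul, zpow_add₀ hq0, this]; ring
        exact hz (2 * m) (by omega) this
      · apply div_ne_zero
        · exact sub_ne_zero.mpr (hz m hm0)
        · exact sub_ne_zero.mpr hq1
    have h2 : ((q ^ m + 1) * ((q ^ m - 1) / (q - 1))) * (φ (Lb m)) (Wb m) = 0 := by
      linear_combination (-1/2 : ℂ) * hc
    exact (mul_eq_zero.mp h2).resolve_left hcoef
  · -- m ≠ n
    have hc := hcoc (Lb 0) (Lb m) (Wb n)
    simp only [hfL, hfW, hLL, hLW, hWL, hWW, map_smul, map_zero, LinearMap.smul_apply, smul_eq_mul,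
      zero_add, add_zero, zpow_zero] at hc
    rw [hskew (Wb n) (Lb m)] at hc
    simp only [hφ0, qnum, sub_self, zero_div, zero_sub, sub_zero, zpow_zero] at hc
    have hne : q ^ m ≠ q ^ n := by
      intro h
      apply hz (m - n) (by omega)
      rw [zpow_sub₀ hq0, h, div_self (zpow_ne_zero _ hq0)]
    have hcoef : 2 * (q ^ m - q ^ n) / (q - 1) ≠ 0 :=
      div_ne_zero (mul_ne_zero two_ne_zero (sub_ne_zero.mpr hne)) (sub_ne_zero.mpr hq1)
    have h2 : (2 * (q ^ m - q ^ n) / (q - 1)) * (φ (Lb m)) (Wb n) = 0 := by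
      linear_combination hc
    exact (mul_eq_zero.mp h2).resolve_left hcoef
end

section
/- In the algebra 𝒰_q generated by {T, T⁻¹, L_m, W_m, C : m ∈ ℤ} with relations T^m L_n = q^{-(n+1)m} L_n T^m, T^m W_n = q^{-(n+1)m} W_n T^m, T T⁻¹ = T⁻¹ T = 1, the comultiplication Δ defined by Δ(L_m) = L_m ⊗ T^m + T^m ⊗ L_m, Δ(W_m) = W_m ⊗ T^m + T^m ⊗ W_m, Δ(C) = C⊗1 + 1⊗C, Δ(T) = T⊗T satisfies: q^m Δ(L_m)Δ(W_n) - q^n Δ(W_n)Δ(L_m) = ([m]_q - [n]_q) Δ(W_{m+n}) + (q^{-m}[m-1]_q[m]_q[m+1]_q / (6(1+q^m))) δ_{m,-n} Δ(C), i.e., Δ preserves the q-bracket relation [L_m, W_n]_q. -/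
open TensorProduct

/-- The central-term coefficient `q^{-m}[m-1]_q[m]_q[m+1]_q / (6(1+q^m))`. -/
noncomputable def ψc (q : ℂ) (m : ℤ) : ℂ :=
  q ^ (-m) * qnum q (m - 1) * qnum q m * qnum q (m + 1) / (6 * (1 + q ^ m))

/-- In `𝒰_q`, the comultiplication `Δ(L_m) = L_m ⊗ T^m + T^m ⊗ L_m`,
`Δ(W_m) = W_m ⊗ T^m + T^m ⊗ W_m`, `Δ(C) = C⊗1 + 1⊗C` preserves the q-bracket relation
`[L_m, W_n]_q`. -/
theorem Delta_preserves_LW_bracket (A : Type*) [Ring A] [Algebra ℂ A]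
    (q : ℂ) (hq0 : q ≠ 0) (hgen : ∀ n : ℤ, n ≠ 0 → q ^ n ≠ 1)
    (Tp : ℤ → A) (L W : ℤ → A) (C : A)
    (hTp0 : Tp 0 = 1) (hTpadd : ∀ m n : ℤ, Tp (m + n) = Tp m * Tp n)
    (hTL : ∀ m n : ℤ, Tp m * L n = q ^ (-(n + 1) * m) • (L n * Tp m))
    (hTW : ∀ m n : ℤ, Tp m * W n = q ^ (-(n + 1) * m) • (W n * Tp m))
    (hTC : ∀ m : ℤ, q ^ m • (Tp m * C) = C * Tp m)
    (hLW : ∀ m n : ℤ, q ^ m • (L m * W n) - q ^ n • (W n * L m)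
      = (qnum q m - qnum q n) • W (m + n) + (if m + n = 0 then ψc q m else 0) • C) :
    ∀ m n : ℤ,
      q ^ m • ((L m ⊗ₜ[ℂ] Tp m + Tp m ⊗ₜ[ℂ] L m) * (W n ⊗ₜ[ℂ] Tp n + Tp n ⊗ₜ[ℂ] W n))
        - q ^ n • ((W n ⊗ₜ[ℂ] Tp n + Tp n ⊗ₜ[ℂ] W n) * (L m ⊗ₜ[ℂ] Tp m + Tp m ⊗ₜ[ℂ] L m))
      = (qnum q m - qnum q n) • (W (m + n) ⊗ₜ[ℂ] Tp (m + n) + Tp (m + n) ⊗ₜ[ℂ] W (m + n))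
        + (if m + n = 0 then ψc q m else 0) • (C ⊗ₜ[ℂ] (1 : A) + (1 : A) ⊗ₜ[ℂ] C) := by
  intro m n
  have hcomm : Tp m * Tp n = Tp (m + n) := (hTpadd m n).symm
  have hcomm' : Tp n * Tp m = Tp (m + n) := by rw [← hTpadd, add_comm]
  -- cross-term identities
  have h2 : W n * Tp m = q ^ ((n + 1) * m) • (Tp m * W n) := by
    rw [hTW m n, smul_smul, ← zpow_add₀ hq0,
      show (n + 1) * m + -(n + 1) * m = 0 by ring, zpow_zero, one_smul]
  have hx1 : q ^ n • ((Tp n * L m) ⊗ₜ[ℂ] (W n * Tp m))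
      = q ^ m • ((L m * Tp n) ⊗ₜ[ℂ] (Tp m * W n)) := by
    rw [hTL n m, h2, TensorProduct.tmul_smul, ← TensorProduct.smul_tmul', smul_smul, smul_smul,
      ← zpow_add₀ hq0, ← zpow_add₀ hq0,
      show n + (n + 1) * m + -(m + 1) * n = m by ring]
  have hx2 : q ^ n • ((W n * Tp m) ⊗ₜ[ℂ] (Tp n * L m))
      = q ^ m • ((Tp m * W n) ⊗ₜ[ℂ] (L m * Tp n)) := by
    rw [hTL n m, h2, TensorProduct.tmul_smul, ← TensorProduct.smul_tmul', smul_smul, smul_smul,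
      ← zpow_add₀ hq0, ← zpow_add₀ hq0,
      show n + -(m + 1) * n + (n + 1) * m = m by ring]
  have hbr := hLW m n
  set α := qnum q m - qnum q n with hα
  set δ := (if m + n = 0 then ψc q m else 0 : ℂ) with hδ
  have e1 : q ^ m • ((L m * W n) ⊗ₜ[ℂ] Tp (m + n)) - q ^ n • ((W n * L m) ⊗ₜ[ℂ] Tp (m + n))
      = α • (W (m + n) ⊗ₜ[ℂ] Tp (m + n)) + δ • (C ⊗ₜ[ℂ] Tp (m + n)) := by
    rw [TensorProduct.smul_tmul', TensorProduct.smul_tmul', ← TensorProduct.sub_tmul, hbr,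
      TensorProduct.add_tmul, ← TensorProduct.smul_tmul', ← TensorProduct.smul_tmul']
  have e2 : q ^ m • (Tp (m + n) ⊗ₜ[ℂ] (L m * W n)) - q ^ n • (Tp (m + n) ⊗ₜ[ℂ] (W n * L m))
      = α • (Tp (m + n) ⊗ₜ[ℂ] W (m + n)) + δ • (Tp (m + n) ⊗ₜ[ℂ] C) := by
    rw [← TensorProduct.tmul_smul, ← TensorProduct.tmul_smul, ← TensorProduct.tmul_sub, hbr,
      TensorProduct.tmul_add, TensorProduct.tmul_smul, TensorProduct.tmul_smul]
  have eT : δ • (C ⊗ₜ[ℂ] Tp (m + n)) = δ • (C ⊗ₜ[ℂ] (1 : A)) := by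
    rcases eq_or_ne (m + n) 0 with h | h
    · rw [h, hTp0]
    · simp [hδ, if_neg h]
  have eT' : δ • (Tp (m + n) ⊗ₜ[ℂ] C) = δ • ((1 : A) ⊗ₜ[ℂ] C) := by
    rcases eq_or_ne (m + n) 0 with h | h
    · rw [h, hTp0]
    · simp [hδ, if_neg h]
  have expand :
      q ^ m • ((L m ⊗ₜ[ℂ] Tp m + Tp m ⊗ₜ[ℂ] L m) * (W n ⊗ₜ[ℂ] Tp n + Tp n ⊗ₜ[ℂ] W n))
        - q ^ n • ((W n ⊗ₜ[ℂ] Tp n + Tp n ⊗ₜ[ℂ] W n) * (L m ⊗ₜ[ℂ] Tp m + Tp m ⊗ₜ[ℂ] L m))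
      = (q ^ m • ((L m * W n) ⊗ₜ[ℂ] Tp (m + n)) - q ^ n • ((W n * L m) ⊗ₜ[ℂ] Tp (m + n)))
        + (q ^ m • (Tp (m + n) ⊗ₜ[ℂ] (L m * W n))
            - q ^ n • (Tp (m + n) ⊗ₜ[ℂ] (W n * L m))) := by
    simp only [mul_add, add_mul, Algebra.TensorProduct.tmul_mul_tmul, smul_add, hcomm, hcomm']
    rw [hx1, hx2]
    abel
  rw [expand, e1, e2, eT, eT', smul_add, smul_add]
  abel
end

section
/- The key tensor identity underlying the Hopf structure: in 𝒰_q ⊗ 𝒰_q, q^m (L_m ⊗ T^m + T^m ⊗ L_m)(W_n ⊗ T^n + T^n ⊗ W_n) - q^n (W_n ⊗ T^n + T^n ⊗ W_n)(L_m ⊗ T^m + T^m ⊗ L_m) = (q^m L_m W_n - q^n W_n L_m) ⊗ T^{m+n} + T^{m+n} ⊗ (q^m L_m W_n - q^n W_n L_m), using the relations T^m X_n = q^{-(n+1)m} X_n T^m for X ∈ {L, W}. -/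
open TensorProduct

/-- The key tensor identity underlying the Hopf structure of `𝒰_q`:
`q^m Δ(L_m)Δ(W_n) - q^n Δ(W_n)Δ(L_m)` equals the q-bracket
`q^m L_m W_n - q^n W_n L_m` placed in the two slots against `T^{m+n}`. -/
theorem Delta_tensor_identity (A : Type*) [Ring A] [Algebra ℂ A]
    (q : ℂ) (hq0 : q ≠ 0) (hgen : ∀ n : ℤ, n ≠ 0 → q ^ n ≠ 1)
    (Tp : ℤ → A) (L W : ℤ → A)
    (hTp0 : Tp 0 = 1) (hTpadd : ∀ m n : ℤ, Tp (m + n) = Tp m * Tp n)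
    (hTL : ∀ m n : ℤ, Tp m * L n = q ^ (-(n + 1) * m) • (L n * Tp m))
    (hTW : ∀ m n : ℤ, Tp m * W n = q ^ (-(n + 1) * m) • (W n * Tp m)) :
    ∀ m n : ℤ,
      q ^ m • ((L m ⊗ₜ[ℂ] Tp m + Tp m ⊗ₜ[ℂ] L m) * (W n ⊗ₜ[ℂ] Tp n + Tp n ⊗ₜ[ℂ] W n))
        - q ^ n • ((W n ⊗ₜ[ℂ] Tp n + Tp n ⊗ₜ[ℂ] W n) * (L m ⊗ₜ[ℂ] Tp m + Tp m ⊗ₜ[ℂ] L m))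
      = (q ^ m • (L m * W n) - q ^ n • (W n * L m)) ⊗ₜ[ℂ] Tp (m + n)
        + Tp (m + n) ⊗ₜ[ℂ] (q ^ m • (L m * W n) - q ^ n • (W n * L m)) := by
  intro m n
  have key : ∀ a b : ℤ, q ^ a * q ^ (-(b + 1) * a) = q ^ (-(a*b)) := by
    intro a b
    rw [← zpow_add₀ hq0]
    ring_nf
  have hc : Tp n * Tp m = Tp m * Tp n := by rw [← hTpadd, ← hTpadd, add_comm]
  rw [hTpadd, mul_add, add_mul, add_mul, mul_add, add_mul, add_mul]
  simp only [Algebra.TensorProduct.tmul_mul_tmul, hTW m n, hTL n m, tmul_smul, ← smul_tmul',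
    smul_add, smul_smul, key, mul_comm m n, sub_tmul, tmul_sub, hc]
  abel
end
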